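/- For a smooth function η: ℝ → ℝ, the two expressions for the elastic operator agree pointwise: (1+η_x²)^{-1/2} · ∂_x[ (1+η_x²)^{-1/2} · ∂_x( η_xx (1+η_x²)^{-3/2} ) ] + (1/2)·( η_xx (1+η_x²)^{-3/2} )³ = ∂_x²[ (1+η_x²)^{-1} · ∂_x( η_x (1+η_x²)^{-1/2} ) ] + (5/2)·∂_x[ η_x η_xx² (1+η_x²)^{-7/2} ]. -/

import Mathlib

/-!
Write `c = (1 + η_x²)^{-1/2}` and `s = η_x c` for the cosine and sine of the tangent angle, and
`κ = η_xx c³` for the curvature. Then `s' = κ` and `c c' = -s κ`, and these two relations alone,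
through the product rule, reduce both sides to `c² κ'' - s κ κ' + κ³ / 2`.
-/

open Real

theorem elastic_identity_of_frame {c s κ : ℝ → ℝ} (hc : Differentiable ℝ c)
    (hs : ∀ x, HasDerivAt s (κ x) x) (hκ : ContDiff ℝ 2 κ)
    (hcs : ∀ x, c x * deriv c x = -(s x * κ x)) (x : ℝ) :
    c x * deriv (fun t => c t * deriv κ t) x + 1 / 2 * κ x ^ 3
      = deriv (deriv fun t => c t ^ 2 * κ t) x + 5 / 2 * deriv (fun t => s t * κ t ^ 2) x := by
  have hκ' : ∀ t, HasDerivAt κ (deriv κ t) t :=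
    fun t => (hκ.differentiable (by norm_num) t).hasDerivAt
  have hκ'' : ∀ t, HasDerivAt (deriv κ) (deriv (deriv κ) t) t :=
    fun t => ((ContDiff.deriv' (n := 1) hκ).differentiable one_ne_zero t).hasDerivAt
  have hc_sq : ∀ t, HasDerivAt (fun t => c t ^ 2) (-2 * (s t * κ t)) t := fun t => by
    refine ((hc t).hasDerivAt.fun_pow 2).congr_deriv ?_
    norm_num
    linear_combination 2 * hcs t
  have h_weighted : deriv (fun t => c t ^ 2 * κ t)
      = fun t => -2 * (s t * κ t) * κ t + c t ^ 2 * deriv κ t :=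
    funext fun t => ((hc_sq t).fun_mul (hκ' t)).deriv
  rw [h_weighted, ((hc x).hasDerivAt.fun_mul (hκ'' x)).deriv,
    (((((hs x).fun_mul (hκ' x)).const_mul (-2)).fun_mul (hκ' x)).fun_add
      ((hc_sq x).fun_mul (hκ'' x))).deriv,
    ((hs x).fun_mul ((hκ' x).fun_pow 2)).deriv]
  linear_combination deriv κ x * hcs x

section OneAddSq

variable {u : ℝ → ℝ} {u' x : ℝ}

theorem hasDerivAt_one_add_sq_rpow (hu : HasDerivAt u u' x) (r : ℝ) :
    HasDerivAt (fun t => (1 + u t ^ 2) ^ r) (2 * r * u x * u' * (1 + u x ^ 2) ^ (r - 1)) x := by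
  convert ((hu.fun_pow 2).const_add 1).rpow_const (p := r) (Or.inl (by positivity)) using 1
  ring

theorem hasDerivAt_one_add_sq_rpow_neg_half (hu : HasDerivAt u u' x) :
    HasDerivAt (fun t => (1 + u t ^ 2) ^ (-(1 : ℝ) / 2))
      (-(u x * u' * (1 + u x ^ 2) ^ (-(3 : ℝ) / 2))) x := by
  convert hasDerivAt_one_add_sq_rpow hu (-(1 : ℝ) / 2) using 1
  norm_num

theorem hasDerivAt_mul_one_add_sq_rpow_neg_half (hu : HasDerivAt u u' x) :
    HasDerivAt (fun t => u t * (1 + u t ^ 2) ^ (-(1 : ℝ) / 2))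
      (u' * (1 + u x ^ 2) ^ (-(3 : ℝ) / 2)) x := by
  refine (hu.fun_mul (hasDerivAt_one_add_sq_rpow_neg_half hu)).congr_deriv ?_
  rw [show -(1 : ℝ) / 2 = 1 + -(3 : ℝ) / 2 by norm_num, rpow_add (by positivity), rpow_one]
  ring

theorem deriv_mul_one_add_sq_rpow_neg_half (hu : Differentiable ℝ u) :
    deriv (fun t => u t * (1 + u t ^ 2) ^ (-(1 : ℝ) / 2))
      = fun t => deriv u t * (1 + u t ^ 2) ^ (-(3 : ℝ) / 2) :=
  funext fun t => (hasDerivAt_mul_one_add_sq_rpow_neg_half (hu t).hasDerivAt).deriv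

theorem one_add_sq_rpow_neg_half_mul_deriv (hu : Differentiable ℝ u) (t : ℝ) :
    (1 + u t ^ 2) ^ (-(1 : ℝ) / 2) * deriv (fun t => (1 + u t ^ 2) ^ (-(1 : ℝ) / 2)) t
      = -(u t * (1 + u t ^ 2) ^ (-(1 : ℝ) / 2) * (deriv u t * (1 + u t ^ 2) ^ (-(3 : ℝ) / 2))) := by
  rw [(hasDerivAt_one_add_sq_rpow_neg_half (hu t).hasDerivAt).deriv]
  ring

theorem contDiff_deriv_mul_one_add_sq_rpow {n : WithTop ℕ∞} (hu : ContDiff ℝ (n + 1) u)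
    (r : ℝ) : ContDiff ℝ n fun t => deriv u t * (1 + u t ^ 2) ^ r :=
  hu.deriv'.mul ((contDiff_const.add ((hu.of_le le_self_add).pow 2)).rpow_const_of_ne
    fun t => by positivity)

end OneAddSq

theorem inv_one_add_sq_eq_rpow_neg_half_sq (a : ℝ) :
    (1 + a ^ 2)⁻¹ = ((1 + a ^ 2) ^ (-(1 : ℝ) / 2)) ^ 2 := by
  rw [← rpow_natCast ((1 + a ^ 2) ^ _) 2, ← rpow_mul (by positivity)]
  norm_num [rpow_neg_one]

theorem mul_sq_mul_one_add_sq_rpow_neg_seven_halves (a b : ℝ) :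
    a * b ^ 2 * (1 + a ^ 2) ^ (-(7 : ℝ) / 2)
      = a * (1 + a ^ 2) ^ (-(1 : ℝ) / 2) * (b * (1 + a ^ 2) ^ (-(3 : ℝ) / 2)) ^ 2 := by
  have hP : 0 < 1 + a ^ 2 := by positivity
  rw [show -(7 : ℝ) / 2 = -(1 : ℝ) / 2 + (-(3 : ℝ) / 2 + -(3 : ℝ) / 2) by norm_num,
    rpow_add hP, rpow_add hP]
  ring

/-- The two expressions for the nonlinear elastic (bending) operator `E(η)` agree
pointwise for a `C⁴` function `η : ℝ → ℝ`. -/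
theorem elastic_operator_two_forms (η : ℝ → ℝ) (hη : ContDiff ℝ 4 η) :
    ∀ x : ℝ,
      (1 + deriv η x ^ 2) ^ (-(1 : ℝ) / 2) *
          deriv (fun x₁ => (1 + deriv η x₁ ^ 2) ^ (-(1 : ℝ) / 2) *
            deriv (fun x₂ => deriv (deriv η) x₂ * (1 + deriv η x₂ ^ 2) ^ (-(3 : ℝ) / 2)) x₁) x
        + (1 / 2) * (deriv (deriv η) x * (1 + deriv η x ^ 2) ^ (-(3 : ℝ) / 2)) ^ 3
      = deriv (deriv (fun x₁ => (1 + deriv η x₁ ^ 2)⁻¹ *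
            deriv (fun x₂ => deriv η x₂ * (1 + deriv η x₂ ^ 2) ^ (-(1 : ℝ) / 2)) x₁)) x
        + (5 / 2) * deriv (fun x₁ => deriv η x₁ * (deriv (deriv η) x₁) ^ 2 *
            (1 + deriv η x₁ ^ 2) ^ (-(7 : ℝ) / 2)) x := by
  have hu : ContDiff ℝ (2 + 1) (deriv η) := ContDiff.deriv' (n := 3) hη
  have hu_diff : Differentiable ℝ (deriv η) := hu.differentiable (by norm_num)
  intro x
  rw [deriv_mul_one_add_sq_rpow_neg_half hu_diff]
  simp only [inv_one_add_sq_eq_rpow_neg_half_sq, mul_sq_mul_one_add_sq_rpow_neg_seven_halves]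
  exact elastic_identity_of_frame
    (fun t => (hasDerivAt_one_add_sq_rpow_neg_half (hu_diff t).hasDerivAt).differentiableAt)
    (fun t => hasDerivAt_mul_one_add_sq_rpow_neg_half (hu_diff t).hasDerivAt)
    (contDiff_deriv_mul_one_add_sq_rpow hu _) (one_add_sq_rpow_neg_half_mul_deriv hu_diff) x
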